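/- In the continuous modal μ-calculus, if x <_ξ y in the dependency order of a clean formula ξ, then x is a μ-variable if and only if y is a μ-variable (i.e. the continuous modal μ-calculus is alternation-free). -/

import Mathlib

/-- Formulas of the modal μ-calculus in negation normal form. -/
inductive Formula : Type
  | atom : ℕ → Formula
  | natom : ℕ → Formula
  | or : Formula → Formula → Formula
  | and : Formula → Formula → Formula
  | dia : Formula → Formula
  | box : Formula → Formula
  | mu : ℕ → Formula → Formula
  | nu : ℕ → Formula → Formula
  deriving DecidableEq

namespace Formula

/-- free variables -/
def fv : Formula → Finset ℕ
  | atom p => {p}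
  | natom p => {p}
  | or φ ψ => fv φ ∪ fv ψ
  | and φ ψ => fv φ ∪ fv ψ
  | dia φ => fv φ
  | box φ => fv φ
  | mu x φ => fv φ \ {x}
  | nu x φ => fv φ \ {x}

/-- bound variables -/
def bv : Formula → Finset ℕ
  | atom _ => ∅
  | natom _ => ∅
  | or φ ψ => bv φ ∪ bv ψ
  | and φ ψ => bv φ ∪ bv ψ
  | dia φ => bv φ
  | box φ => bv φ
  | mu x φ => insert x (bv φ)
  | nu x φ => insert x (bv φ)

/-- the multiset of variables bound by binders (with multiplicity) -/
def binders : Formula → Multiset ℕ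
  | atom _ => 0
  | natom _ => 0
  | or φ ψ => binders φ + binders ψ
  | and φ ψ => binders φ + binders ψ
  | dia φ => binders φ
  | box φ => binders φ
  | mu x φ => x ::ₘ binders φ
  | nu x φ => x ::ₘ binders φ

/-- negation, keeping the variables in `X` fixed (used under fixpoint binders, where
`∼ηx.φ := η̄x.∼φ[¬x/x]`, so that the double negation on `x` cancels). -/
def negF : Finset ℕ → Formula → Formula
  | X, atom p => if p ∈ X then atom p else natom p
  | X, natom p => if p ∈ X then natom p else atom p
  | X, or φ ψ => and (negF X φ) (negF X ψ)
  | X, and φ ψ => or (negF X φ) (negF X ψ)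
  | X, dia φ => box (negF X φ)
  | X, box φ => dia (negF X φ)
  | X, mu x φ => nu x (negF (insert x X) φ)
  | X, nu x φ => mu x (negF (insert x X) φ)

/-- the negation operator `∼` on negation normal forms -/
def neg : Formula → Formula := negF ∅

/-- substitution of `ψ` for the variable `x` (formulas are assumed tidy, so that
no capture occurs; at negative occurrences the negation of `ψ` is substituted). -/
def subst : Formula → ℕ → Formula → Formula
  | atom p, x, ψ => if p = x then ψ else atom p
  | natom p, x, ψ => if p = x then neg ψ else natom p
  | or φ₁ φ₂, x, ψ => or (subst φ₁ x ψ) (subst φ₂ x ψ)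
  | and φ₁ φ₂, x, ψ => and (subst φ₁ x ψ) (subst φ₂ x ψ)
  | dia φ, x, ψ => dia (subst φ x ψ)
  | box φ, x, ψ => box (subst φ x ψ)
  | mu y φ, x, ψ => if y = x then mu y φ else mu y (subst φ x ψ)
  | nu y φ, x, ψ => if y = x then nu y φ else nu y (subst φ x ψ)

def bot : Formula := and (atom 0) (natom 0)
def top : Formula := or (atom 0) (natom 0)
def impl (φ ψ : Formula) : Formula := or (neg φ) ψ
def iffF (φ ψ : Formula) : Formula := and (impl φ ψ) (impl ψ φ)

end Formula

open Formula

/-- the Fischer-Ladner closure (as an inductively defined predicate) -/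
inductive FL (Φ : Set Formula) : Formula → Prop
  | base : ∀ {φ}, φ ∈ Φ → FL Φ φ
  | natom : ∀ {p}, FL Φ (.natom p) → FL Φ (.atom p)
  | orL : ∀ {φ ψ}, FL Φ (.or φ ψ) → FL Φ φ
  | orR : ∀ {φ ψ}, FL Φ (.or φ ψ) → FL Φ ψ
  | andL : ∀ {φ ψ}, FL Φ (.and φ ψ) → FL Φ φ
  | andR : ∀ {φ ψ}, FL Φ (.and φ ψ) → FL Φ ψ
  | dia : ∀ {φ}, FL Φ (.dia φ) → FL Φ φ
  | box : ∀ {φ}, FL Φ (.box φ) → FL Φ φ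
  | mu : ∀ {x φ}, FL Φ (.mu x φ) → FL Φ (subst φ x (.mu x φ))
  | nu : ∀ {x φ}, FL Φ (.nu x φ) → FL Φ (subst φ x (.nu x φ))

/-- `Cl Φ` : the FL-closure of `Φ` -/
def Cl (Φ : Set Formula) : Set Formula := {φ | FL Φ φ}

def FLClosed (Sg : Set Formula) : Prop := ∀ φ, FL Sg φ → φ ∈ Sg

/-- the subformula relation `⊴` -/
inductive Subf : Formula → Formula → Prop
  | refl : ∀ φ, Subf φ φ
  | orL : ∀ {φ ψ₁ ψ₂}, Subf φ ψ₁ → Subf φ (.or ψ₁ ψ₂)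
  | orR : ∀ {φ ψ₁ ψ₂}, Subf φ ψ₂ → Subf φ (.or ψ₁ ψ₂)
  | andL : ∀ {φ ψ₁ ψ₂}, Subf φ ψ₁ → Subf φ (.and ψ₁ ψ₂)
  | andR : ∀ {φ ψ₁ ψ₂}, Subf φ ψ₂ → Subf φ (.and ψ₁ ψ₂)
  | dia : ∀ {φ ψ}, Subf φ ψ → Subf φ (.dia ψ)
  | box : ∀ {φ ψ}, Subf φ ψ → Subf φ (.box ψ)
  | mu : ∀ {φ x ψ}, Subf φ ψ → Subf φ (.mu x ψ)
  | nu : ∀ {φ x ψ}, Subf φ ψ → Subf φ (.nu x ψ)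

/-- strict subformula `⊲` -/
def SSubf (φ ψ : Formula) : Prop := Subf φ ψ ∧ φ ≠ ψ

/-- a formula is tidy if its free and bound variables are disjoint -/
def Tidy (φ : Formula) : Prop := Disjoint (fv φ) (bv φ)

/-- a formula is clean if it is tidy and every bound variable has a unique binder -/
def Clean (φ : Formula) : Prop := Tidy φ ∧ (binders φ).Nodup

/-- `x` has binder `μ` in `ξ` -/
def MuVar (ξ : Formula) (x : ℕ) : Prop := ∃ δ, Subf (.mu x δ) ξ
/-- `x` has binder `ν` in `ξ` -/
def NuVar (ξ : Formula) (x : ℕ) : Prop := ∃ δ, Subf (.nu x δ) ξ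

/-- base of the dependency order: `x <_ξ y` whenever `δ_x ⊲ δ_y` and `y ⊲ δ_x` -/
def depBase (ξ : Formula) (x y : ℕ) : Prop :=
  ∃ δx δy : Formula,
    (Subf (.mu x δx) ξ ∨ Subf (.nu x δx) ξ) ∧
    (Subf (.mu y δy) ξ ∨ Subf (.nu y δy) ξ) ∧
    SSubf δx δy ∧ SSubf (.atom y) δx

/-- the dependency order `<_ξ` : the least strict partial order containing `depBase` -/
def dep (ξ : Formula) : ℕ → ℕ → Prop := Relation.TransGen (depBase ξ)

mutual
  /-- membership in the continuous modal μ-calculus `μ_cML` -/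
  inductive MuC : Formula → Prop
    | atom : ∀ p, MuC (.atom p)
    | natom : ∀ p, MuC (.natom p)
    | or : ∀ {φ ψ}, MuC φ → MuC ψ → MuC (.or φ ψ)
    | and : ∀ {φ ψ}, MuC φ → MuC ψ → MuC (.and φ ψ)
    | dia : ∀ {φ}, MuC φ → MuC (.dia φ)
    | box : ∀ {φ}, MuC φ → MuC (.box φ)
    | mu : ∀ {x φ}, ContIn ({x} : Set ℕ) φ → MuC (.mu x φ)
    | nu : ∀ {x φ}, CoconIn ({x} : Set ℕ) φ → MuC (.nu x φ)
  /-- the fragment of `μ_cML`-formulas continuous in `X` -/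
  inductive ContIn : Set ℕ → Formula → Prop
    | var : ∀ {X x}, x ∈ X → ContIn X (.atom x)
    | free : ∀ {X α}, MuC α → (∀ x ∈ X, x ∉ fv α) → ContIn X α
    | or : ∀ {X φ ψ}, ContIn X φ → ContIn X ψ → ContIn X (.or φ ψ)
    | and : ∀ {X φ ψ}, ContIn X φ → ContIn X ψ → ContIn X (.and φ ψ)
    | dia : ∀ {X φ}, ContIn X φ → ContIn X (.dia φ)
    | mu : ∀ {X y φ}, ContIn (insert y X) φ → ContIn X (.mu y φ)
  /-- the fragment of `μ_cML`-formulas cocontinuous in `X` -/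
  inductive CoconIn : Set ℕ → Formula → Prop
    | var : ∀ {X x}, x ∈ X → CoconIn X (.atom x)
    | free : ∀ {X α}, MuC α → (∀ x ∈ X, x ∉ fv α) → CoconIn X α
    | or : ∀ {X φ ψ}, CoconIn X φ → CoconIn X ψ → CoconIn X (.or φ ψ)
    | and : ∀ {X φ ψ}, CoconIn X φ → CoconIn X ψ → CoconIn X (.and φ ψ)
    | box : ∀ {X φ}, CoconIn X φ → CoconIn X (.box φ)
    | nu : ∀ {X y φ}, CoconIn (insert y X) φ → CoconIn X (.nu y φ)
end

/-- a basic modal formula: no fixpoint operators -/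
def IsBasic : Formula → Prop
  | .or φ ψ => IsBasic φ ∧ IsBasic ψ
  | .and φ ψ => IsBasic φ ∧ IsBasic ψ
  | .dia φ => IsBasic φ
  | .box φ => IsBasic φ
  | .mu _ _ => False
  | .nu _ _ => False
  | _ => True

/- ########  Semantics  ######## -/

/-- algebraic semantics: the meaning of a formula, relative to a valuation -/
def sem {S : Type} (R : S → S → Prop) : Formula → (ℕ → Set S) → Set S
  | .atom p, V => V p
  | .natom p, V => (V p)ᶜ
  | .or φ ψ, V => sem R φ V ∪ sem R ψ V
  | .and φ ψ, V => sem R φ V ∩ sem R ψ V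
  | .dia φ, V => {s | ∃ t, R s t ∧ t ∈ sem R φ V}
  | .box φ, V => {s | ∀ t, R s t → t ∈ sem R φ V}
  | .mu x φ, V => ⋂₀ {X : Set S | sem R φ (Function.update V x X) ⊆ X}
  | .nu x φ, V => ⋃₀ {X : Set S | X ⊆ sem R φ (Function.update V x X)}

/-- Kripke models -/
structure KModel where
  S : Type
  R : S → S → Prop
  V : ℕ → Set S

/-- Kripke frames -/
structure KFrame where
  S : Type
  R : S → S → Prop

def sat (M : KModel) (s : M.S) (φ : Formula) : Prop := s ∈ sem M.R φ M.V

def validM (M : KModel) (φ : Formula) : Prop := ∀ s, sat M s φ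

def validF (F : KFrame) (φ : Formula) : Prop := ∀ (V : ℕ → Set F.S) (s : F.S), s ∈ sem F.R φ V

def frameOf (M : KModel) : KFrame := ⟨M.S, M.R⟩

/- ########  Filtration  ######## -/

/-- Σ-equivalence: satisfying the same formulas of `Sg` -/
def fEquiv (M : KModel) (Sg : Finset Formula) : Setoid M.S :=
  ⟨fun s t => ∀ φ ∈ Sg, (sat M s φ ↔ sat M t φ),
   ⟨fun _ _ _ => Iff.rfl, fun h φ hφ => (h φ hφ).symm,
    fun h1 h2 φ hφ => (h1 φ hφ).trans (h2 φ hφ)⟩⟩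

def FStates (M : KModel) (Sg : Finset Formula) : Type := Quotient (fEquiv M Sg)

def fcls (M : KModel) (Sg : Finset Formula) (s : M.S) : FStates M Sg :=
  Quotient.mk (fEquiv M Sg) s

/-- a filtration of `M` through `Sg`: a relation between `R^min` and `R^max`,
with the induced valuation on atoms of `Sg` -/
structure Filtration (M : KModel) (Sg : Finset Formula) where
  R' : FStates M Sg → FStates M Sg → Prop
  V' : ℕ → Set (FStates M Sg)
  rmin : ∀ s t : M.S, M.R s t → R' (fcls M Sg s) (fcls M Sg t)
  rmax : ∀ s t : M.S, R' (fcls M Sg s) (fcls M Sg t) →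
      ∀ φ, Formula.box φ ∈ Sg → sat M s (.box φ) → sat M t φ
  hv : ∀ p, Formula.atom p ∈ Sg → ∀ s : M.S, (fcls M Sg s ∈ V' p ↔ s ∈ M.V p)

def filtModel (M : KModel) (Sg : Finset Formula) (F : Filtration M Sg) : KModel :=
  ⟨FStates M Sg, F.R', F.V'⟩

/-- a class of models admits filtration with respect to a language `D` -/
def AdmFilt (Mcl : KModel → Prop) (D : Formula → Prop) : Prop :=
  ∀ M, Mcl M → ∀ Sg : Finset Formula, FLClosed ↑Sg → (∀ φ ∈ Sg, D φ) →
    ∃ F : Filtration M Sg, Mcl (filtModel M Sg F)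

/- ########  Proof systems  ######## -/

/-- propositional evaluation (modal/fixpoint formulas treated as atoms) -/
def beval (v : Formula → Bool) : Formula → Bool
  | .atom p => v (.atom p)
  | .natom p => !v (.atom p)
  | .or φ ψ => beval v φ || beval v ψ
  | .and φ ψ => beval v φ && beval v ψ
  | φ => v φ

/-- the basic normal modal logic axiomatised by `Ax` -/
inductive BPrf (Ax : Set Formula) : Formula → Prop
  | ax : ∀ {φ}, φ ∈ Ax → BPrf Ax φ
  | taut : ∀ {φ}, (∀ v, beval v φ = true) → BPrf Ax φ
  | norm : BPrf Ax (neg (.dia bot))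
  | addL : ∀ {φ ψ}, BPrf Ax (impl (.dia (.or φ ψ)) (.or (.dia φ) (.dia ψ)))
  | addR : ∀ {φ ψ}, BPrf Ax (impl (.or (.dia φ) (.dia ψ)) (.dia (.or φ ψ)))
  | dual1 : ∀ {φ}, BPrf Ax (impl (.dia φ) (neg (.box (neg φ))))
  | dual2 : ∀ {φ}, BPrf Ax (impl (neg (.box (neg φ))) (.dia φ))
  | mp : ∀ {φ ψ}, BPrf Ax (impl φ ψ) → BPrf Ax φ → BPrf Ax ψ
  | mono : ∀ {φ ψ}, BPrf Ax (impl φ ψ) → BPrf Ax (impl (.dia φ) (.dia ψ))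
  | monoBox : ∀ {φ ψ}, BPrf Ax (impl φ ψ) → BPrf Ax (impl (.box φ) (.box ψ))
  | nec : ∀ {φ}, BPrf Ax φ → BPrf Ax (.box φ)
  | usubst : ∀ {φ x ψ}, BPrf Ax φ → BPrf Ax (subst φ x ψ)

/-- the μ_c-logic axiomatised by `Ax` : the least extension of `μ_c K` by the axioms
`Ax` closed under the rules -/
inductive Prf (Ax : Set Formula) : Formula → Prop
  | ax : ∀ {φ}, φ ∈ Ax → Prf Ax φ
  | taut : ∀ {φ}, (∀ v, beval v φ = true) → Prf Ax φ
  | norm : Prf Ax (neg (.dia bot))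
  | addL : ∀ {φ ψ}, Prf Ax (impl (.dia (.or φ ψ)) (.or (.dia φ) (.dia ψ)))
  | addR : ∀ {φ ψ}, Prf Ax (impl (.or (.dia φ) (.dia ψ)) (.dia (.or φ ψ)))
  | dual1 : ∀ {φ}, Prf Ax (impl (.dia φ) (neg (.box (neg φ))))
  | dual2 : ∀ {φ}, Prf Ax (impl (neg (.box (neg φ))) (.dia φ))
  | mp : ∀ {φ ψ}, Prf Ax (impl φ ψ) → Prf Ax φ → Prf Ax ψ
  | mono : ∀ {φ ψ}, Prf Ax (impl φ ψ) → Prf Ax (impl (.dia φ) (.dia ψ))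
  | monoBox : ∀ {φ ψ}, Prf Ax (impl φ ψ) → Prf Ax (impl (.box φ) (.box ψ))
  | nec : ∀ {φ}, Prf Ax φ → Prf Ax (.box φ)
  | usubst : ∀ {φ x ψ}, Prf Ax φ → Prf Ax (subst φ x ψ)
  | prefixAx : ∀ {x φ}, ContIn ({x} : Set ℕ) φ → Prf Ax (impl (subst φ x (.mu x φ)) (.mu x φ))
  | lfp : ∀ {x φ γ}, ContIn ({x} : Set ℕ) φ → Prf Ax (impl (subst φ x γ) γ) → Prf Ax (impl (.mu x φ) γ)
  | postfixAx : ∀ {x φ}, CoconIn ({x} : Set ℕ) φ → Prf Ax (impl (.nu x φ) (subst φ x (.nu x φ)))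
  | gfp : ∀ {x φ γ}, CoconIn ({x} : Set ℕ) φ → Prf Ax (impl γ (subst φ x γ)) → Prf Ax (impl γ (.nu x φ))

/- ########  Consistency and (finitary) canonical models  ######## -/

def conjList : List Formula → Formula
  | [] => top
  | φ :: l => .and φ (conjList l)

/-- `Γ` is inconsistent wrt a provability predicate `P` -/
def Incons (P : Formula → Prop) (Γ : Set Formula) : Prop :=
  ∃ l : List Formula, (∀ φ ∈ l, φ ∈ Γ) ∧ P (impl (conjList l) bot)

def Cons (P : Formula → Prop) (Γ : Set Formula) : Prop := ¬ Incons P Γ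

def MaxCons (P : Formula → Prop) (Γ : Set Formula) : Prop :=
  Cons P Γ ∧ ∀ Γ' : Set Formula, Γ ⊂ Γ' → Incons P Γ'

/-- consistency of a single formula -/
def ConsF (P : Formula → Prop) (φ : Formula) : Prop := Cons P {φ}

/-- `ψ_A` : the conjunction of a finite set of formulas -/
noncomputable def conjF (A : Finset Formula) : Formula := conjList A.toList

/-- `ψ_U` : the disjunction of the conjunctions of the members of `U` -/
noncomputable def disjF (U : Finset (Finset Formula)) : Formula :=
  (U.toList.map conjF).foldr .or bot

/-- `∼`-closed and FL-closed -/
def NegFLClosed (Sg : Finset Formula) : Prop :=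
  FLClosed ↑Sg ∧ ∀ φ ∈ Sg, neg φ ∈ Sg

/-- the states of a model over `Sg` : intersections of maximally consistent sets with `Sg` -/
def States (P : Formula → Prop) (Sg : Finset Formula) : Set (Finset Formula) :=
  {A | ∃ Γ : Set Formula, MaxCons P Γ ∧ ↑A = Γ ∩ ↑Sg}

/-- a model over `Sg` with respect to the logic `P` -/
structure ModelOver (P : Formula → Prop) (Sg : Finset Formula) where
  R : Finset Formula → Finset Formula → Prop
  rmin : ∀ A ∈ States P Sg, ∀ B ∈ States P Sg,
      ConsF P (.and (conjF A) (.dia (conjF B))) → R A B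
  rmax : ∀ A ∈ States P Sg, ∀ B ∈ States P Sg, R A B →
      ∀ φ, Formula.box φ ∈ Sg → Formula.box φ ∈ A → φ ∈ B

/-- the Kripke model induced by a model over `Sg` -/
noncomputable def modelOf (P : Formula → Prop) (Sg : Finset Formula)
    (M : ModelOver P Sg) : KModel :=
  ⟨{A : Finset Formula // A ∈ States P Sg}, fun A B => M.R A.1 B.1,
   fun p => {A | Formula.atom p ∈ A.1}⟩

/-- the canonical frame of the logic `P` -/
def canFrame (P : Formula → Prop) : KFrame :=
  ⟨{Γ : Set Formula // MaxCons P Γ}, fun Γ Δ => ∀ φ, Formula.box φ ∈ Γ.1 → φ ∈ Δ.1⟩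

/-- the canonical model of the logic `P`, with an arbitrary valuation `V` -/
def canModelWith (P : Formula → Prop) (V : ℕ → Set {Γ : Set Formula // MaxCons P Γ}) :
    KModel :=
  ⟨{Γ : Set Formula // MaxCons P Γ}, fun Γ Δ => ∀ φ, Formula.box φ ∈ Γ.1 → φ ∈ Δ.1, V⟩

/-- the canonical model of the logic `P` -/
def canModel (P : Formula → Prop) : KModel :=
  canModelWith P (fun p => {Γ | Formula.atom p ∈ Γ.1})

/- ########  Expansions and name-expansions  ######## -/

/-- iterated substitution `φ[β₁/x₁]⋯[βₙ/xₙ]` -/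
def expandBy : List (ℕ × Formula) → Formula → Formula
  | [], φ => φ
  | (x, β) :: l, φ => expandBy l (subst φ x β)

/-- an enumeration of the bound variables of `ξ`, paired with their fixpoint formulas,
respecting the dependency order -/
structure GoodEnum (ξ : Formula) (l : List (ℕ × Formula)) : Prop where
  nodup : (l.map Prod.fst).Nodup
  mem : ∀ x, x ∈ l.map Prod.fst ↔ x ∈ bv ξ
  bind : ∀ p ∈ l, (∃ δ, p.2 = Formula.mu p.1 δ ∧ Subf p.2 ξ) ∨
                  (∃ δ, p.2 = Formula.nu p.1 δ ∧ Subf p.2 ξ)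
  resp : ∀ i j : Fin l.length, dep ξ (l.get i).1 (l.get j).1 → (i : ℕ) < (j : ℕ)

/-- the body `δ` of a fixpoint formula `ηx.δ` -/
def body : Formula → Formula
  | .mu _ δ => δ
  | .nu _ δ => δ
  | φ => φ

/-- name-expansion: substitute `u x` for each bound variable `x` in the list -/
def nexpBy (u : ℕ → Formula) : List ℕ → Formula → Formula
  | [], φ => φ
  | x :: l, φ => nexpBy u l (subst φ x (u x))

/-! In a clean formula, a bound variable `y` occurring free in a subformula `ψ` forces `ψ` to
lie inside the body of the unique binder of `y`. So in a base step `x <_ξ y` with `y` a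
μ-variable and `x` a ν-variable, the formula `νx.δ_x` lies inside `δ_y` and has `y` free.
But `δ_y` is continuous in `y`, and a formula continuous in `y` admits `ν` only inside
constituents in which `y` is not free. The case of a ν-variable `y` and a μ-variable `x` is
dual, using cocontinuity. Hence base steps of `<_ξ`, and so `<_ξ` itself, preserve the kind
of binder. -/

namespace Formula

def binderVar : Formula → Option ℕ
  | mu x _ => some x
  | nu x _ => some x
  | _ => none

theorem mem_bv_iff {φ : Formula} {y : ℕ} : y ∈ bv φ ↔ y ∈ binders φ := by
  induction φ <;> simp_all [bv, binders]

theorem mem_binders_of_binderVar {β : Formula} {y : ℕ} (h : β.binderVar = some y) :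
    y ∈ binders β := by
  cases β <;> simp_all [binderVar, binders]

theorem notMem_binders_body_of_nodup {β : Formula} {y : ℕ} (h : β.binderVar = some y)
    (hnd : (binders β).Nodup) : y ∉ binders (body β) := by
  cases β <;> simp_all [binderVar, binders, body]

end Formula

namespace Subf

theorem binders_le {ψ φ : Formula} (h : Subf ψ φ) : binders ψ ≤ binders φ := by
  induction h with
  | refl => exact le_rfl
  | orL _ ih | andL _ ih => exact ih.trans (Multiset.le_add_right _ _)
  | orR _ ih | andR _ ih => exact ih.trans (Multiset.le_add_left _ _)
  | dia _ ih | box _ ih => exact ih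
  | mu _ ih | nu _ ih => exact ih.trans (Multiset.le_cons_self _ _)

theorem fv_subset {ψ φ : Formula} (h : Subf ψ φ) : fv ψ ⊆ fv φ ∪ bv φ := by
  induction h with
  | refl => exact Finset.subset_union_left
  | _ _ ih =>
    intro y hy
    have := ih hy
    simp only [fv, bv, Finset.mem_union, Finset.mem_sdiff, Finset.mem_singleton,
      Finset.mem_insert] at this ⊢
    tauto

theorem mem_bv_of_mem_fv {ψ φ : Formula} {y : ℕ} (h : Subf ψ φ) (hy : y ∈ fv ψ)
    (hyφ : y ∉ fv φ) : y ∈ bv φ :=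
  (Finset.mem_union.mp (h.fv_subset hy)).resolve_left hyφ

theorem binderVar_mem_binders {β ξ : Formula} {y : ℕ} (h : Subf β ξ)
    (hβ : β.binderVar = some y) : y ∈ binders ξ :=
  Multiset.mem_of_le h.binders_le (mem_binders_of_binderVar hβ)

theorem notMem_binders_body {β ξ : Formula} {y : ℕ} (hnd : (binders ξ).Nodup)
    (h : Subf β ξ) (hβ : β.binderVar = some y) : y ∉ binders (body β) :=
  notMem_binders_body_of_nodup hβ (Multiset.nodup_of_le h.binders_le hnd)

theorem eq_of_binderVar_eq {β₁ β₂ ξ : Formula} {y : ℕ} (hnd : (binders ξ).Nodup)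
    (h₁ : Subf β₁ ξ) (h₂ : Subf β₂ ξ) (hβ₁ : β₁.binderVar = some y)
    (hβ₂ : β₂.binderVar = some y) : β₁ = β₂ := by
  induction ξ with
  | atom | natom => cases h₁; cases hβ₁
  | or a b iha ihb | and a b iha ihb =>
    simp only [binders, Multiset.nodup_add] at hnd
    obtain ⟨hnda, hndb, hdisj⟩ := hnd
    cases h₁ <;> cases h₂ <;> first
      | cases hβ₁ | cases hβ₂
      | exact iha hnda ‹_› ‹_› | exact ihb hndb ‹_› ‹_›
      | exact (Multiset.disjoint_left.mp hdisj (binderVar_mem_binders ‹Subf β₁ a› hβ₁)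
          (binderVar_mem_binders ‹Subf β₂ b› hβ₂)).elim
      | exact (Multiset.disjoint_left.mp hdisj (binderVar_mem_binders ‹Subf β₂ a› hβ₂)
          (binderVar_mem_binders ‹Subf β₁ b› hβ₁)).elim
  | dia a ih | box a ih =>
    cases h₁ <;> cases h₂ <;> first | cases hβ₁ | cases hβ₂ | exact ih hnd ‹_› ‹_›
  | mu w χ ih | nu w χ ih =>
    simp only [binders, Multiset.nodup_cons] at hnd
    cases h₁ <;> cases h₂
    · rfl
    · cases hβ₁; exact (hnd.1 (binderVar_mem_binders ‹_› hβ₂)).elim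
    · cases hβ₂; exact (hnd.1 (binderVar_mem_binders ‹_› hβ₁)).elim
    · exact ih hnd.2 ‹_› ‹_›

end Subf

namespace Subf

theorem exists_binder_of_mem_fv {ψ ξ : Formula} {y : ℕ} (h : Subf ψ ξ) (hy : y ∈ fv ψ)
    (hyξ : y ∉ fv ξ) : ∃ β, Subf β ξ ∧ β.binderVar = some y ∧ Subf ψ (body β) := by
  induction h with
  | refl => exact absurd hy hyξ
  | @orL a b _ ih | @andL a b _ ih =>
    obtain ⟨β, hβ, hβy, hψ⟩ := ih (fun h => hyξ (by simp [fv, h]))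
    exact ⟨β, by constructor; exact hβ, hβy, hψ⟩
  | @orR a b _ ih | @andR a b _ ih =>
    obtain ⟨β, hβ, hβy, hψ⟩ := ih (fun h => hyξ (by simp [fv, h]))
    exact ⟨β, by first | exact .orR hβ | exact .andR hβ, hβy, hψ⟩
  | dia _ ih | box _ ih =>
    obtain ⟨β, hβ, hβy, hψ⟩ := ih hyξ
    exact ⟨β, by constructor; exact hβ, hβy, hψ⟩
  | @mu x χ hψ ih | @nu x χ hψ ih =>
    by_cases hyx : y = x
    · subst hyx
      exact ⟨_, .refl _, rfl, hψ⟩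
    · obtain ⟨β, hβ, hβy, hψ⟩ := ih (fun h => hyξ (by simp [fv, h, hyx]))
      exact ⟨β, by constructor; exact hβ, hβy, hψ⟩

end Subf

theorem Clean.subf_body_of_mem_fv {ξ β ψ : Formula} {y : ℕ} (hξ : Clean ξ) (hβ : Subf β ξ)
    (hβy : β.binderVar = some y) (hψ : Subf ψ ξ) (hy : y ∈ fv ψ) : Subf ψ (body β) := by
  have hyξ : y ∉ fv ξ :=
    Finset.disjoint_right.mp hξ.1 (mem_bv_iff.mpr (hβ.binderVar_mem_binders hβy))
  obtain ⟨β', hβ', hβ'y, hψβ'⟩ := hψ.exists_binder_of_mem_fv hy hyξ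
  rwa [Subf.eq_of_binderVar_eq hξ.2 hβ hβ' hβy hβ'y]

theorem Clean.not_muVar_of_subf_nu {ξ δ : Formula} {y : ℕ} (hξ : Clean ξ)
    (h : Subf (.nu y δ) ξ) : ¬ MuVar ξ y := by
  rintro ⟨δ', h'⟩
  cases Subf.eq_of_binderVar_eq hξ.2 h h' rfl rfl

theorem ContIn.anti {X Y : Set ℕ} {φ : Formula} (h : ContIn X φ) (hYX : Y ⊆ X) :
    ContIn Y φ := by
  induction φ generalizing X Y with
  | atom p =>
    cases h with
    | var hp =>
      by_cases hpY : p ∈ Y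
      · exact .var hpY
      · exact .free (.atom p) (fun z hz hzp => by simp_all [fv])
    | free hm hfv => exact .free hm (fun z hz => hfv z (hYX hz))
  | natom | box =>
    cases h with
    | free hm hfv => exact .free hm (fun z hz => hfv z (hYX hz))
  | or a b iha ihb =>
    cases h with
    | free hm hfv => exact .free hm (fun z hz => hfv z (hYX hz))
    | or ha hb => exact .or (iha ha hYX) (ihb hb hYX)
  | and a b iha ihb =>
    cases h with
    | free hm hfv => exact .free hm (fun z hz => hfv z (hYX hz))
    | and ha hb => exact .and (iha ha hYX) (ihb hb hYX)
  | dia a ih =>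
    cases h with
    | free hm hfv => exact .free hm (fun z hz => hfv z (hYX hz))
    | dia ha => exact .dia (ih ha hYX)
  | mu w χ ih =>
    cases h with
    | free hm hfv => exact .free hm (fun z hz => hfv z (hYX hz))
    | mu hχ => exact .mu (ih hχ (Set.insert_subset_insert hYX))
  | nu =>
    cases h with
    | free hm hfv => exact .free hm (fun z hz => hfv z (hYX hz))

theorem CoconIn.anti {X Y : Set ℕ} {φ : Formula} (h : CoconIn X φ) (hYX : Y ⊆ X) :
    CoconIn Y φ := by
  induction φ generalizing X Y with
  | atom p =>
    cases h with
    | var hp =>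
      by_cases hpY : p ∈ Y
      · exact .var hpY
      · exact .free (.atom p) (fun z hz hzp => by simp_all [fv])
    | free hm hfv => exact .free hm (fun z hz => hfv z (hYX hz))
  | natom | dia =>
    cases h with
    | free hm hfv => exact .free hm (fun z hz => hfv z (hYX hz))
  | or a b iha ihb =>
    cases h with
    | free hm hfv => exact .free hm (fun z hz => hfv z (hYX hz))
    | or ha hb => exact .or (iha ha hYX) (ihb hb hYX)
  | and a b iha ihb =>
    cases h with
    | free hm hfv => exact .free hm (fun z hz => hfv z (hYX hz))
    | and ha hb => exact .and (iha ha hYX) (ihb hb hYX)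
  | box a ih =>
    cases h with
    | free hm hfv => exact .free hm (fun z hz => hfv z (hYX hz))
    | box ha => exact .box (ih ha hYX)
  | nu w χ ih =>
    cases h with
    | free hm hfv => exact .free hm (fun z hz => hfv z (hYX hz))
    | nu hχ => exact .nu (ih hχ (Set.insert_subset_insert hYX))
  | mu =>
    cases h with
    | free hm hfv => exact .free hm (fun z hz => hfv z (hYX hz))

theorem ContIn.muC {X : Set ℕ} {φ : Formula} (h : ContIn X φ) : MuC φ := by
  induction φ generalizing X with
  | atom p => exact .atom p
  | or a b iha ihb =>
    cases h with
    | free hm => exact hm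
    | or ha hb => exact .or (iha ha) (ihb hb)
  | and a b iha ihb =>
    cases h with
    | free hm => exact hm
    | and ha hb => exact .and (iha ha) (ihb hb)
  | dia a ih =>
    cases h with
    | free hm => exact hm
    | dia ha => exact .dia (ih ha)
  | mu w χ =>
    cases h with
    | free hm => exact hm
    | mu hχ => exact .mu (hχ.anti (by simp))
  | natom | box | nu => cases h with | free hm => exact hm

theorem CoconIn.muC {X : Set ℕ} {φ : Formula} (h : CoconIn X φ) : MuC φ := by
  induction φ generalizing X with
  | atom p => exact .atom p
  | or a b iha ihb =>
    cases h with
    | free hm => exact hm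
    | or ha hb => exact .or (iha ha) (ihb hb)
  | and a b iha ihb =>
    cases h with
    | free hm => exact hm
    | and ha hb => exact .and (iha ha) (ihb hb)
  | box a ih =>
    cases h with
    | free hm => exact hm
    | box ha => exact .box (ih ha)
  | nu w χ =>
    cases h with
    | free hm => exact hm
    | nu hχ => exact .nu (hχ.anti (by simp))
  | natom | dia | mu => cases h with | free hm => exact hm

theorem MuC.of_subf {ψ φ : Formula} (h : MuC φ) (hψ : Subf ψ φ) : MuC ψ := by
  induction hψ with
  | refl => exact h
  | orL _ ih | orR _ ih => cases h with | or ha hb => first | exact ih ha | exact ih hb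
  | andL _ ih | andR _ ih => cases h with | and ha hb => first | exact ih ha | exact ih hb
  | dia _ ih => cases h with | dia ha => exact ih ha
  | box _ ih => cases h with | box ha => exact ih ha
  | mu _ ih => cases h with | mu hχ => exact ih hχ.muC
  | nu _ ih => cases h with | nu hχ => exact ih hχ.muC

theorem MuC.contIn_of_subf_mu {ξ δ : Formula} {y : ℕ} (h : MuC ξ) (hy : Subf (.mu y δ) ξ) :
    ContIn {y} δ := by
  cases h.of_subf hy with | mu hδ => exact hδ

theorem MuC.coconIn_of_subf_nu {ξ δ : Formula} {y : ℕ} (h : MuC ξ) (hy : Subf (.nu y δ) ξ) :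
    CoconIn {y} δ := by
  cases h.of_subf hy with | nu hδ => exact hδ

theorem ContIn.mem_bv_of_subf_nu {X : Set ℕ} {φ δ : Formula} {y z : ℕ} (h : ContIn X φ)
    (hs : Subf (.nu z δ) φ) (hyX : y ∈ X) (hy : y ∈ fv (.nu z δ)) : y ∈ bv φ := by
  induction φ generalizing X with
  | atom | natom => cases hs
  | or a b iha ihb =>
    cases h with
    | free _ hfv => exact hs.mem_bv_of_mem_fv hy (hfv y hyX)
    | or ha hb =>
      cases hs with
      | orL hs => simp [bv, iha ha hs hyX]
      | orR hs => simp [bv, ihb hb hs hyX]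
  | and a b iha ihb =>
    cases h with
    | free _ hfv => exact hs.mem_bv_of_mem_fv hy (hfv y hyX)
    | and ha hb =>
      cases hs with
      | andL hs => simp [bv, iha ha hs hyX]
      | andR hs => simp [bv, ihb hb hs hyX]
  | dia a ih =>
    cases h with
    | free _ hfv => exact hs.mem_bv_of_mem_fv hy (hfv y hyX)
    | dia ha => cases hs with | dia hs => exact ih ha hs hyX
  | mu w χ ih =>
    cases h with
    | free _ hfv => exact hs.mem_bv_of_mem_fv hy (hfv y hyX)
    | mu hχ =>
      cases hs with
      | mu hs => simp [bv, ih hχ hs (Set.mem_insert_of_mem w hyX)]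
  | box | nu =>
    cases h with
    | free _ hfv => exact hs.mem_bv_of_mem_fv hy (hfv y hyX)

theorem CoconIn.mem_bv_of_subf_mu {X : Set ℕ} {φ δ : Formula} {y z : ℕ} (h : CoconIn X φ)
    (hs : Subf (.mu z δ) φ) (hyX : y ∈ X) (hy : y ∈ fv (.mu z δ)) : y ∈ bv φ := by
  induction φ generalizing X with
  | atom | natom => cases hs
  | or a b iha ihb =>
    cases h with
    | free _ hfv => exact hs.mem_bv_of_mem_fv hy (hfv y hyX)
    | or ha hb =>
      cases hs with
      | orL hs => simp [bv, iha ha hs hyX]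
      | orR hs => simp [bv, ihb hb hs hyX]
  | and a b iha ihb =>
    cases h with
    | free _ hfv => exact hs.mem_bv_of_mem_fv hy (hfv y hyX)
    | and ha hb =>
      cases hs with
      | andL hs => simp [bv, iha ha hs hyX]
      | andR hs => simp [bv, ihb hb hs hyX]
  | box a ih =>
    cases h with
    | free _ hfv => exact hs.mem_bv_of_mem_fv hy (hfv y hyX)
    | box ha => cases hs with | box hs => exact ih ha hs hyX
  | nu w χ ih =>
    cases h with
    | free _ hfv => exact hs.mem_bv_of_mem_fv hy (hfv y hyX)
    | nu hχ =>
      cases hs with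
      | nu hs => simp [bv, ih hχ hs (Set.mem_insert_of_mem w hyX)]
  | dia | mu =>
    cases h with
    | free _ hfv => exact hs.mem_bv_of_mem_fv hy (hfv y hyX)

theorem MuC.notMem_fv_nu_body_of_subf_mu {ξ δa δb : Formula} {a b : ℕ} (h : MuC ξ)
    (hc : Clean ξ) (hb : Subf (.mu b δb) ξ) (ha : Subf (.nu a δa) ξ) : b ∉ fv δa := by
  intro hbδa
  have hab : a ≠ b := by rintro rfl; exact hc.not_muVar_of_subf_nu ha ⟨δb, hb⟩
  have hfv : b ∈ fv (.nu a δa) := by simp [fv, hbδa, Ne.symm hab]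
  have hscope : Subf (.nu a δa) δb := hc.subf_body_of_mem_fv hb rfl ha hfv
  have hbv := (h.contIn_of_subf_mu hb).mem_bv_of_subf_nu hscope rfl hfv
  exact hb.notMem_binders_body hc.2 rfl (mem_bv_iff.mp hbv)

theorem MuC.notMem_fv_mu_body_of_subf_nu {ξ δa δb : Formula} {a b : ℕ} (h : MuC ξ)
    (hc : Clean ξ) (hb : Subf (.nu b δb) ξ) (ha : Subf (.mu a δa) ξ) : b ∉ fv δa := by
  intro hbδa
  have hab : a ≠ b := by rintro rfl; exact hc.not_muVar_of_subf_nu hb ⟨δa, ha⟩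
  have hfv : b ∈ fv (.mu a δa) := by simp [fv, hbδa, Ne.symm hab]
  have hscope : Subf (.mu a δa) δb := hc.subf_body_of_mem_fv hb rfl ha hfv
  have hbv := (h.coconIn_of_subf_nu hb).mem_bv_of_subf_mu hscope rfl hfv
  exact hb.notMem_binders_body hc.2 rfl (mem_bv_iff.mp hbv)

theorem MuC.muVar_iff_of_depBase {ξ : Formula} {a b : ℕ} (h : MuC ξ) (hc : Clean ξ)
    (hab : depBase ξ a b) : MuVar ξ a ↔ MuVar ξ b := by
  obtain ⟨δa, δb, ha, hb, ⟨hδ, -⟩, ⟨hbδa, -⟩⟩ := hab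
  have hbδb : b ∉ binders δb := by
    rcases hb with hb | hb <;> exact hb.notMem_binders_body hc.2 rfl
  have hfv : b ∈ fv δa := by
    by_contra hbδa'
    have hbv := hbδa.mem_bv_of_mem_fv (by simp [fv]) hbδa'
    exact hbδb (Multiset.mem_of_le hδ.binders_le (mem_bv_iff.mp hbv))
  rcases ha with ha | ha <;> rcases hb with hb | hb
  · exact iff_of_true ⟨δa, ha⟩ ⟨δb, hb⟩
  · exact (h.notMem_fv_mu_body_of_subf_nu hc hb ha hfv).elim
  · exact (h.notMem_fv_nu_body_of_subf_mu hc hb ha hfv).elim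
  · exact iff_of_false (hc.not_muVar_of_subf_nu ha) (hc.not_muVar_of_subf_nu hb)

/-- In the continuous modal μ-calculus, if `x <_ξ y` in the dependency
order of a clean formula `ξ`, then `x` is a μ-variable iff `y` is (alternation freeness). -/
theorem muC_alternation_free (ξ : Formula) (hmu : MuC ξ) (hclean : Clean ξ)
    (x y : ℕ) (h : dep ξ x y) : (MuVar ξ x ↔ MuVar ξ y) := by
  induction h with
  | single hxy => exact hmu.muVar_iff_of_depBase hclean hxy
  | tail _ hyz ih => exact ih.trans (hmu.muVar_iff_of_depBase hclean hyz)
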